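/- Fix real constants κ₁ < 0, κ₂ > 0, κ₃ > 0 and a > 0, and define ρ(r_cpu, r_mem) = a·(g(r_cpu) + m(r_mem)) for r_cpu > 0, r_mem > 0. Then ρ is a convex function on the open positive quadrant, and ρ is strictly decreasing in each of its two arguments (with the other held fixed). -/

import Mathlib

/-!
Both summands are convex and strictly decreasing on `(0, ∞)`, and `ρ` is a positive multiple
of their sum taken along the two coordinate projections. For `m(r) = exp (κ₃ / r)` this is `exp`,
convex and increasing, after the convex decreasing `r ↦ κ₃ / r`. For `g`, write
`g(r) = -κ₁ (1 - exp (-κ₂ r))⁻¹ + κ₁`: `r ↦ exp (-κ₂ r)` is convex and strictly decreasing with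
values in `(0, 1)`, and `s ↦ (1 - s)⁻¹` is convex and strictly increasing on `(-∞, 1)`.
-/

open Real Set

theorem ConvexOn.comp_of_mapsTo {𝕜 E α β : Type*} [Semiring 𝕜] [PartialOrder 𝕜]
    [AddCommMonoid E] [AddCommMonoid α] [PartialOrder α] [AddCommMonoid β] [PartialOrder β]
    [SMul 𝕜 E] [SMul 𝕜 α] [SMul 𝕜 β] {s : Set E} {t : Set β} {f : E → β} {g : β → α}
    (hg : ConvexOn 𝕜 t g) (hf : ConvexOn 𝕜 s f) (hg' : MonotoneOn g t) (hst : MapsTo f s t) :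
    ConvexOn 𝕜 s (g ∘ f) :=
  ⟨hf.1, fun _ hx _ hy _ _ ha hb hab =>
    (hg' (hst (hf.1 hx hy ha hb hab)) (hg.1 (hst hx) (hst hy) ha hb hab)
      (hf.2 hx hy ha hb hab)).trans (hg.2 (hst hx) (hst hy) ha hb hab)⟩

section Prod

variable {𝕜 E F β : Type*} [Semiring 𝕜] [PartialOrder 𝕜] [AddCommMonoid E] [AddCommMonoid F]
  [Module 𝕜 E] [Module 𝕜 F] [AddCommMonoid β] [PartialOrder β] [SMul 𝕜 β] {s : Set E} {t : Set F}

theorem ConvexOn.comp_fst_prod {f : E → β} (hf : ConvexOn 𝕜 s f) (ht : Convex 𝕜 t) :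
    ConvexOn 𝕜 (s ×ˢ t) (f ∘ Prod.fst) :=
  (hf.comp_linearMap (LinearMap.fst 𝕜 E F)).subset (fun _ hp => hp.1) (hf.1.prod ht)

theorem ConvexOn.comp_snd_prod {f : F → β} (hf : ConvexOn 𝕜 t f) (hs : Convex 𝕜 s) :
    ConvexOn 𝕜 (s ×ˢ t) (f ∘ Prod.snd) :=
  (hf.comp_linearMap (LinearMap.snd 𝕜 E F)).subset (fun _ hp => hp.2) (hs.prod hf.1)

end Prod

theorem convexOn_inv_one_sub : ConvexOn ℝ (Iio 1) fun s : ℝ => (1 - s)⁻¹ := by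
  have h := (convexOn_zpow (𝕜 := ℝ) (-1)).comp_affineMap
    (AffineMap.const ℝ ℝ (1 : ℝ) - AffineMap.id ℝ ℝ)
  have hs : (AffineMap.const ℝ ℝ (1 : ℝ) - AffineMap.id ℝ ℝ) ⁻¹' Ioi 0 = Iio 1 := by
    ext; simp
  rw [hs] at h
  exact h.congr fun s _ => by simp

theorem strictMonoOn_inv_one_sub : StrictMonoOn (fun s : ℝ => (1 - s)⁻¹) (Iio 1) :=
  fun _ hs _ ht hst => inv_strictAntiOn (mem_Ioi.2 (sub_pos.2 ht)) (mem_Ioi.2 (sub_pos.2 hs))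
    (sub_lt_sub_left hst 1)

theorem convexOn_exp_div {c : ℝ} (hc : 0 ≤ c) : ConvexOn ℝ (Ioi 0) fun r => exp (c / r) := by
  have hinv : ConvexOn ℝ (Ioi 0) fun r : ℝ => c / r := by
    simpa [div_eq_mul_inv] using (convexOn_zpow (𝕜 := ℝ) (-1)).smul hc
  exact convexOn_exp.comp_of_mapsTo hinv (exp_monotone.monotoneOn _) (mapsTo_univ _ _)

theorem strictAntiOn_exp_div {c : ℝ} (hc : 0 < c) :
    StrictAntiOn (fun r => exp (c / r)) (Ioi 0) :=
  exp_strictMono.comp_strictAntiOn fun _ hx _ _ hxy => div_lt_div_of_pos_left hc hx hxy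

theorem convexOn_exp_neg_mul (c : ℝ) : ConvexOn ℝ univ fun r => exp (-(c * r)) :=
  (convexOn_exp.comp_linearMap (LinearMap.mul ℝ ℝ (-c))).congr fun _ _ => by simp

theorem strictAnti_exp_neg_mul {c : ℝ} (hc : 0 < c) : StrictAnti fun r => exp (-(c * r)) :=
  exp_strictMono.comp_strictAnti fun _ _ h => neg_lt_neg (mul_lt_mul_of_pos_left h hc)

theorem mapsTo_exp_neg_mul {c : ℝ} (hc : 0 < c) :
    MapsTo (fun r => exp (-(c * r))) (Ioi 0) (Iio 1) :=
  fun _ hr => exp_lt_one_iff.2 (neg_lt_zero.2 (mul_pos hc hr))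

theorem div_one_sub_exp_eq (a : ℝ) {u : ℝ} (hu : u ≠ 0) :
    a / (1 - exp u) = -a * (1 - exp (-u))⁻¹ + a := by
  have hne : 1 - exp u ≠ 0 := sub_ne_zero.2 (Ne.symm (mt (exp_eq_one_iff u).1 hu))
  have hne' : exp u - 1 ≠ 0 := sub_ne_zero.2 (mt (exp_eq_one_iff u).1 hu)
  have hinv : 1 - (exp u)⁻¹ = (exp u - 1) / exp u := by field_simp
  rw [exp_neg, hinv, inv_div]
  field_simp
  ring

theorem convexOn_div_one_sub_exp {a c : ℝ} (ha : a ≤ 0) (hc : 0 < c) :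
    ConvexOn ℝ (Ioi 0) fun r => a / (1 - exp (c * r)) := by
  have hdecay := (convexOn_exp_neg_mul c).subset (subset_univ _) (convex_Ioi 0)
  have h := convexOn_inv_one_sub.comp_of_mapsTo hdecay strictMonoOn_inv_one_sub.monotoneOn
    (mapsTo_exp_neg_mul hc)
  exact ((h.smul (neg_nonneg.2 ha)).add_const a).congr fun r hr =>
    (div_one_sub_exp_eq a (mul_pos hc hr).ne').symm

theorem strictAntiOn_div_one_sub_exp {a c : ℝ} (ha : a < 0) (hc : 0 < c) :
    StrictAntiOn (fun r => a / (1 - exp (c * r))) (Ioi 0) := by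
  have h : StrictMonoOn (fun s => -a * (1 - s)⁻¹ + a) (Iio 1) := fun _ hs _ ht hst =>
    (add_lt_add_iff_right a).2
      (mul_lt_mul_of_pos_left (strictMonoOn_inv_one_sub hs ht hst) (neg_pos.2 ha))
  exact (h.comp_strictAntiOn ((strictAnti_exp_neg_mul hc).strictAntiOn _)
    (mapsTo_exp_neg_mul hc)).congr fun r hr => (div_one_sub_exp_eq a (mul_pos hc hr).ne').symm

/-- The utilization `ρ(r_cpu, r_mem) = a·(g(r_cpu) + m(r_mem))`, with
`g(r) = κ₁/(1 − exp(κ₂·r))`, `m(r) = exp(κ₃/r)` and `a > 0`, is convex on the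
open positive quadrant and strictly decreasing in each of its two arguments
(the other held fixed). -/
theorem utilization_convex_and_decreasing
    (κ₁ κ₂ κ₃ a : ℝ) (hκ₁ : κ₁ < 0) (hκ₂ : 0 < κ₂) (hκ₃ : 0 < κ₃) (ha : 0 < a) :
    ConvexOn ℝ (Set.Ioi (0 : ℝ) ×ˢ Set.Ioi (0 : ℝ))
      (fun p : ℝ × ℝ =>
        a * (κ₁ / (1 - Real.exp (κ₂ * p.1)) + Real.exp (κ₃ / p.2))) ∧
    (∀ rmem : ℝ, 0 < rmem →
      StrictAntiOn
        (fun rcpu : ℝ =>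
          a * (κ₁ / (1 - Real.exp (κ₂ * rcpu)) + Real.exp (κ₃ / rmem)))
        (Set.Ioi (0 : ℝ))) ∧
    (∀ rcpu : ℝ, 0 < rcpu →
      StrictAntiOn
        (fun rmem : ℝ =>
          a * (κ₁ / (1 - Real.exp (κ₂ * rcpu)) + Real.exp (κ₃ / rmem)))
        (Set.Ioi (0 : ℝ))) := by
  refine ⟨?_, fun rmem _ => ?_, fun rcpu _ => ?_⟩
  · exact (((convexOn_div_one_sub_exp hκ₁.le hκ₂).comp_fst_prod (convex_Ioi 0)).add
      ((convexOn_exp_div hκ₃.le).comp_snd_prod (convex_Ioi 0))).smul ha.le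
  · exact (strictMono_mul_left_of_pos ha).comp_strictAntiOn
      ((strictAntiOn_div_one_sub_exp hκ₁ hκ₂).add_const _)
  · exact (strictMono_mul_left_of_pos ha).comp_strictAntiOn
      ((strictAntiOn_exp_div hκ₃).const_add _)
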